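/- arXiv:1607.04737 — 3 statements merged into one kernel-verified Lean document; each statement's English description precedes it below -/
import Mathlib

section
/- Let μ be the product measure on (Fin (n+1) → ℝ) of the Gamma(γ_j, 1) distributions, and for y ∈ (0,∞)^{n+1} set Ξ_i(y) = (1/σ_i)·∑_{j=1}^{n+1} c_{i,j} y_j. Then for every t = (t_1,…,t_n) with all t_i ≥ 0, the Laplace transform of the multivariate gamma vector (Ξ_1,…,Ξ_n) satisfies ∫ exp(−∑_{i=1}^n t_i Ξ_i(y)) dμ(y) = ∏_{j=1}^{n+1} (1 + ∑_{i=1}^n (c_{i,j}/σ_i)·t_i)^{−γ_j}. -/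
/-!
Each `Ξ_i` is a nonnegative combination of the independent coordinates `y_j`, so
`∑ᵢ tᵢ Ξᵢ(y) = ∑ⱼ sⱼ yⱼ` with `sⱼ = ∑ᵢ (c_{i,j}/σᵢ) tᵢ ≥ 0`. The exponential then factors over
the coordinates, Fubini splits the integral into one-dimensional ones, and multiplying the
`Gamma(a, r)` density by `e^{-s y}` gives `(r / (r + s))^a` times the `Gamma(a, r + s)` density.
-/

open MeasureTheory ProbabilityTheory Real

namespace ProbabilityTheory

lemma gammaPDFReal_mul_exp_neg_mul (a : ℝ) {r s : ℝ} (hr : 0 ≤ r) (hrs : 0 < r + s) (y : ℝ) :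
    gammaPDFReal a r y * exp (-(s * y)) = (r / (r + s)) ^ a * gammaPDFReal a (r + s) y := by
  unfold gammaPDFReal
  split_ifs
  · have hpow : (r / (r + s)) ^ a * (r + s) ^ a = r ^ a := by
      rw [← mul_rpow (div_nonneg hr hrs.le) hrs.le, div_mul_cancel₀ r hrs.ne']
    have hexp : exp (-(r * y)) * exp (-(s * y)) = exp (-((r + s) * y)) := by
      rw [← exp_add]; ring_nf
    rw [← hpow, ← hexp]
    ring
  · simp

lemma lintegral_exp_neg_mul_gammaMeasure {a r s : ℝ} (ha : 0 < a) (hr : 0 ≤ r)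
    (hrs : 0 < r + s) :
    ∫⁻ y, ENNReal.ofReal (exp (-(s * y))) ∂gammaMeasure a r
      = ENNReal.ofReal ((r / (r + s)) ^ a) := by
  have htilt : ∀ y, gammaPDF a r y * ENNReal.ofReal (exp (-(s * y)))
      = ENNReal.ofReal ((r / (r + s)) ^ a) * gammaPDF a (r + s) y := fun y => by
    rw [gammaPDF, gammaPDF, ← ENNReal.ofReal_mul' (exp_pos _).le,
      ← ENNReal.ofReal_mul (by positivity), gammaPDFReal_mul_exp_neg_mul a hr hrs]
  rw [gammaMeasure, lintegral_withDensity_eq_lintegral_mul _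
      (show Measurable (gammaPDF a r) from (measurable_gammaPDFReal a r).ennreal_ofReal)
      (by fun_prop)]
  simp only [Pi.mul_apply, htilt]
  rw [lintegral_const_mul _
      (show Measurable (gammaPDF a (r + s)) from (measurable_gammaPDFReal a (r + s)).ennreal_ofReal),
    lintegral_gammaPDF_eq_one ha hrs, mul_one]

lemma integral_exp_neg_mul_gammaMeasure {a r s : ℝ} (ha : 0 < a) (hr : 0 ≤ r)
    (hrs : 0 < r + s) :
    ∫ y, exp (-(s * y)) ∂gammaMeasure a r = (r / (r + s)) ^ a := by
  rw [integral_eq_lintegral_of_nonneg_ae (ae_of_all _ fun y => (exp_pos _).le)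
      (by fun_prop), lintegral_exp_neg_mul_gammaMeasure ha hr hrs,
    ENNReal.toReal_ofReal (rpow_nonneg (div_nonneg hr hrs.le) a)]

lemma integral_exp_neg_sum_mul_pi_gammaMeasure {ι : Type*} [Fintype ι] {a r s : ι → ℝ}
    (ha : ∀ j, 0 < a j) (hr : ∀ j, 0 < r j) (hrs : ∀ j, 0 < r j + s j) :
    ∫ y : ι → ℝ, exp (-∑ j, s j * y j) ∂Measure.pi (fun j => gammaMeasure (a j) (r j))
      = ∏ j, (r j / (r j + s j)) ^ a j := by
  have : ∀ j, IsProbabilityMeasure (gammaMeasure (a j) (r j)) := fun j =>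
    isProbabilityMeasure_gammaMeasure (ha j) (hr j)
  simp only [← Finset.sum_neg_distrib, exp_sum]
  rw [integral_fintype_prod_eq_prod (fun j y => exp (-(s j * y)))]
  exact Finset.prod_congr rfl fun j _ =>
    integral_exp_neg_mul_gammaMeasure (ha j) (hr j).le (hrs j)

end ProbabilityTheory

theorem laplace_transform_multivariate_gamma_general
    (n : ℕ)
    (σ : Fin n → ℝ) (hσ : ∀ i, 0 < σ i)
    (γ : Fin (n + 1) → ℝ) (hγ : ∀ j, 0 < γ j)
    (c : Fin n → Fin (n + 1) → ℝ) (hc : ∀ i j, c i j = 0 ∨ c i j = 1)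
    (t : Fin n → ℝ) (ht : ∀ i, 0 ≤ t i) :
    ∫ y : Fin (n + 1) → ℝ,
        Real.exp (-∑ i, t i * ((1 / σ i) * ∑ j, c i j * y j))
        ∂(Measure.pi fun j => gammaMeasure (γ j) 1)
      = ∏ j, (1 + ∑ i, (c i j / σ i) * t i) ^ (-(γ j)) := by
  set s : Fin (n + 1) → ℝ := fun j => ∑ i, (c i j / σ i) * t i
  have hs : ∀ j, 0 ≤ s j := fun j => Finset.sum_nonneg fun i _ => by
    have hc_nonneg : 0 ≤ c i j := by rcases hc i j with h | h <;> simp [h]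
    exact mul_nonneg (div_nonneg hc_nonneg (hσ i).le) (ht i)
  have hswap : ∀ y : Fin (n + 1) → ℝ,
      ∑ i, t i * ((1 / σ i) * ∑ j, c i j * y j) = ∑ j, s j * y j := fun y => by
    simp only [s, Finset.mul_sum, Finset.sum_mul]
    rw [Finset.sum_comm]
    exact Finset.sum_congr rfl fun j _ => Finset.sum_congr rfl fun i _ => by ring
  simp only [hswap]
  rw [integral_exp_neg_sum_mul_pi_gammaMeasure hγ (fun _ => one_pos)
    (fun j => by linarith [hs j])]
  refine Finset.prod_congr rfl fun j _ => ?_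
  rw [one_div, inv_rpow (by linarith [hs j]), rpow_neg (by linarith [hs j])]

/-- Laplace transform of the multivariate gamma vector
`Ξ_i(y) = (1/σ_i) ∑_j c_{i,j} y_j` under the product of `Gamma(γ_j, 1)` laws. -/
theorem laplace_transform_multivariate_gamma
    (n : ℕ) (hn : 1 ≤ n)
    (σ : Fin n → ℝ) (hσ : ∀ i, 0 < σ i)
    (γ : Fin (n + 1) → ℝ) (hγ : ∀ j, 0 < γ j)
    (c : Fin n → Fin (n + 1) → ℝ) (hc : ∀ i j, c i j = 0 ∨ c i j = 1)
    (t : Fin n → ℝ) (ht : ∀ i, 0 ≤ t i) :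
    ∫ y : Fin (n + 1) → ℝ,
        Real.exp (-∑ i, t i * ((1 / σ i) * ∑ j, c i j * y j))
        ∂(Measure.pi fun j => gammaMeasure (γ j) 1)
      = ∏ j, (1 + ∑ i, (c i j / σ i) * t i) ^ (-(γ j)) :=
  laplace_transform_multivariate_gamma_general n σ hσ γ hγ c hc t ht
end

section
/- In the Pa^c(σ,γ) model, for every x = (x_1,…,x_n) with all x_i ≥ 0, the joint survival (decumulative distribution) function of (X_1,…,X_n) is ν{(λ,y) : X_i(λ,y) > x_i for all i = 1,…,n} = ∏_{j=1}^{n+1} (1 + ∑_{i=1}^n (c_{i,j}/σ_i)·x_i)^{−γ_j}. In other words, the vector (Λ_1/Ξ_1,…,Λ_n/Ξ_n) of unit exponentials divided by coordinates of the multivariate gamma vector Ξ_i = (1/σ_i)∑_j c_{i,j}Y_j has the multivariate Pareto d.d.f. above. -/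
open MeasureTheory ProbabilityTheory Real

/-- The `Pa^c(σ,γ)` model measure: product of `n` unit exponentials (`Gamma(1,1)`)
and `n+1` independent `Gamma(γ_j, 1)` laws. -/
noncomputable def paretoModelMeasure (n : ℕ) (γ : Fin (n + 1) → ℝ) :
    Measure ((Fin n → ℝ) × (Fin (n + 1) → ℝ)) :=
  (Measure.pi fun _ : Fin n => gammaMeasure 1 1).prod
    (Measure.pi fun j => gammaMeasure (γ j) 1)

/-- The coordinates `X_i(λ,y) = σ_i λ_i / ∑_j c_{i,j} y_j` of the multivariate Pareto. -/
noncomputable def paretoCoord (n : ℕ) (σ : Fin n → ℝ) (c : Fin n → Fin (n + 1) → ℝ)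
    (i : Fin n) (p : (Fin n → ℝ) × (Fin (n + 1) → ℝ)) : ℝ :=
  σ i * p.1 i / ∑ j, c i j * p.2 j

/-!
Condition on the gamma vector `y`. Given `y`, the event `X_i > x_i` says that the unit exponential
`λ_i` exceeds `x_i ∑_j c_{i,j} y_j / σ_i`, so the conditional probability is
`exp (-∑_i x_i ∑_j c_{i,j} y_j / σ_i) = ∏_j exp (-t_j y_j)` with `t_j = ∑_i c_{i,j} x_i / σ_i`.
Integrating this product against the independent `Gamma(γ_j, 1)` laws of the `y_j` gives the
product of their Laplace transforms `(1 + t_j)^{-γ_j}`.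
-/

open Set
open scoped ENNReal

lemma lintegral_pi_prod_eq_prod_lintegral {ι : Type*} [Fintype ι] {Ω : ι → Type*}
    [∀ i, MeasurableSpace (Ω i)] {μ : (i : ι) → Measure (Ω i)}
    [∀ i, IsProbabilityMeasure (μ i)] {f : (i : ι) → Ω i → ℝ≥0∞} (hf : ∀ i, Measurable (f i)) :
    ∫⁻ ω, ∏ i, f i (ω i) ∂Measure.pi μ = ∏ i, ∫⁻ x, f i x ∂μ i := by
  rw [lintegral_prod_eq_prod_lintegral_of_indepFun Finset.univ (fun i (ω : ∀ j, Ω j) ↦ f i (ω i))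
    (iIndepFun_pi fun i ↦ (hf i).aemeasurable) fun i ↦ (hf i).comp (measurable_pi_apply i)]
  exact Finset.prod_congr rfl fun i _ ↦ (measurePreserving_eval μ i).lintegral_comp (hf i)

lemma gammaMeasure_Iic_zero (a r : ℝ) : gammaMeasure a r (Iic 0) = 0 := by
  rw [gammaMeasure, withDensity_apply _ measurableSet_Iic,
    setLIntegral_congr Iio_ae_eq_Iic.symm]
  exact lintegral_gammaPDF_of_nonpos le_rfl

lemma ae_pos_gammaMeasure (a r : ℝ) : ∀ᵐ y ∂gammaMeasure a r, 0 < y := by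
  rw [ae_iff]
  simp only [not_lt]
  exact gammaMeasure_Iic_zero a r

lemma expMeasure_Ioi {r b : ℝ} (hr : 0 < r) (hb : 0 ≤ b) :
    expMeasure r (Ioi b) = ENNReal.ofReal (exp (-(r * b))) := by
  have := isProbabilityMeasure_expMeasure hr
  have hexp : exp (-(r * b)) ≤ 1 := exp_le_one_iff.2 (neg_nonpos.2 (mul_nonneg hr.le hb))
  rw [← compl_Iic, prob_compl_eq_one_sub measurableSet_Iic, ← ofReal_cdf, cdf_expMeasure_eq hr,
    if_pos hb, ← ENNReal.ofReal_one, ← ENNReal.ofReal_sub 1 (sub_nonneg.2 hexp), sub_sub_cancel]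

lemma pi_expMeasure_pi_Ioi {ι : Type*} [Fintype ι] {r b : ι → ℝ} (hr : ∀ i, 0 < r i)
    (hb : ∀ i, 0 ≤ b i) :
    Measure.pi (fun i ↦ expMeasure (r i)) (univ.pi fun i ↦ Ioi (b i))
      = ENNReal.ofReal (exp (-∑ i, r i * b i)) := by
  have := fun i ↦ isProbabilityMeasure_expMeasure (hr i)
  rw [Measure.pi_pi, ← Finset.sum_neg_distrib, exp_sum,
    ENNReal.ofReal_prod_of_nonneg fun i _ ↦ (exp_pos _).le]
  exact Finset.prod_congr rfl fun i _ ↦ expMeasure_Ioi (hr i) (hb i)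

lemma gammaPDF_mul_exp_neg_mul {a r t y : ℝ} (ha : 0 < a) (hr : 0 < r) (hrt : 0 < r + t) :
    gammaPDF a r y * ENNReal.ofReal (exp (-(t * y)))
      = ENNReal.ofReal ((r / (r + t)) ^ a) * gammaPDF a (r + t) y := by
  rcases lt_or_ge y 0 with hy | hy
  · rw [gammaPDF_of_neg hy, gammaPDF_of_neg hy, zero_mul, mul_zero]
  rw [gammaPDF_of_nonneg hy, gammaPDF_of_nonneg hy, ← ENNReal.ofReal_mul (by positivity),
    ← ENNReal.ofReal_mul (by positivity), div_rpow hr.le hrt.le]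
  congr 1
  have hΓ := (Gamma_pos_of_pos ha).ne'
  have hrta := (rpow_pos_of_pos hrt a).ne'
  rw [add_mul, neg_add, exp_add]
  field_simp

lemma lintegral_exp_neg_mul_gammaMeasure {a r t : ℝ} (ha : 0 < a) (hr : 0 < r)
    (hrt : 0 < r + t) :
    ∫⁻ y, ENNReal.ofReal (exp (-(t * y))) ∂gammaMeasure a r
      = ENNReal.ofReal ((r / (r + t)) ^ a) := by
  have hm : ∀ r, Measurable (gammaPDF a r) := fun r ↦ (measurable_gammaPDFReal a r).ennreal_ofReal
  rw [gammaMeasure, lintegral_withDensity_eq_lintegral_mul _ (hm r) (by fun_prop)]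
  simp only [Pi.mul_apply, gammaPDF_mul_exp_neg_mul ha hr hrt]
  rw [lintegral_const_mul _ (hm (r + t)),
    lintegral_gammaPDF_eq_one ha hrt, mul_one]

lemma sum_mul_pos_of_exists_pos {ι : Type*} [Fintype ι] {c y : ι → ℝ} (hc : ∀ j, 0 ≤ c j)
    (hc_pos : ∃ j, 0 < c j) (hy : ∀ j, 0 < y j) : 0 < ∑ j, c j * y j := by
  obtain ⟨j, hj⟩ := hc_pos
  exact Finset.sum_pos' (fun k _ ↦ mul_nonneg (hc k) (hy k).le)
    ⟨j, Finset.mem_univ j, mul_pos hj (hy j)⟩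

lemma measurable_paretoCoord (n : ℕ) (σ : Fin n → ℝ) (c : Fin n → Fin (n + 1) → ℝ) (i : Fin n) :
    Measurable (paretoCoord n σ c i) := by
  unfold paretoCoord
  fun_prop

section Pareto

variable {n : ℕ} {σ : Fin n → ℝ} {c : Fin n → Fin (n + 1) → ℝ} {x : Fin n → ℝ}
  {y : Fin (n + 1) → ℝ}

lemma preimage_paretoCoord_slice (hσ : ∀ i, 0 < σ i) (hS : ∀ i, 0 < ∑ j, c i j * y j) :
    (fun l ↦ (l, y)) ⁻¹' {p | ∀ i, x i < paretoCoord n σ c i p}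
      = univ.pi fun i ↦ Ioi (x i * (∑ j, c i j * y j) / σ i) := by
  ext l
  simp only [mem_preimage, mem_ofPred_eq, mem_univ_pi, mem_Ioi, paretoCoord]
  refine forall_congr' fun i ↦ ?_
  rw [lt_div_iff₀ (hS i), div_lt_iff₀ (hσ i), mul_comm (σ i)]

lemma pi_expMeasure_paretoCoord_slice (hσ : ∀ i, 0 < σ i) (hc : ∀ i j, 0 ≤ c i j)
    (hc_pos : ∀ i, ∃ j, 0 < c i j) (hx : ∀ i, 0 ≤ x i) (hy : ∀ j, 0 < y j) :
    Measure.pi (fun _ : Fin n ↦ expMeasure 1)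
        ((fun l ↦ (l, y)) ⁻¹' {p | ∀ i, x i < paretoCoord n σ c i p})
      = ∏ j, ENNReal.ofReal (exp (-((∑ i, c i j / σ i * x i) * y j))) := by
  have hS i := sum_mul_pos_of_exists_pos (hc i) (hc_pos i) hy
  rw [preimage_paretoCoord_slice hσ hS,
    pi_expMeasure_pi_Ioi (fun _ ↦ one_pos)
      fun i ↦ div_nonneg (mul_nonneg (hx i) (hS i).le) (hσ i).le,
    ← ENNReal.ofReal_prod_of_nonneg fun j _ ↦ (exp_pos _).le, ← exp_sum, Finset.sum_neg_distrib]
  congr 3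
  simp only [one_mul, Finset.mul_sum, Finset.sum_div, Finset.sum_mul]
  rw [Finset.sum_comm]
  exact Finset.sum_congr rfl fun j _ ↦ Finset.sum_congr rfl fun i _ ↦ by ring

end Pareto

theorem multivariate_pareto_survival_general
    (n : ℕ)
    (σ : Fin n → ℝ) (hσ : ∀ i, 0 < σ i)
    (γ : Fin (n + 1) → ℝ) (hγ : ∀ j, 0 < γ j)
    (c : Fin n → Fin (n + 1) → ℝ) (hc : ∀ i j, c i j = 0 ∨ c i j = 1)
    (hrow : ∀ i, ∃ j, c i j = 1)
    (x : Fin n → ℝ) (hx : ∀ i, 0 ≤ x i) :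
    paretoModelMeasure n γ {p | ∀ i, x i < paretoCoord n σ c i p}
      = ENNReal.ofReal (∏ j, (1 + ∑ i, (c i j / σ i) * x i) ^ (-(γ j))) := by
  have hc_nonneg (i j) : 0 ≤ c i j := by rcases hc i j with h | h <;> simp [h]
  have hc_pos (i) : ∃ j, 0 < c i j := (hrow i).imp fun j (hj : c i j = 1) ↦ hj ▸ one_pos
  have ht (j) : 0 < 1 + ∑ i, c i j / σ i * x i := by
    have : 0 ≤ ∑ i, c i j / σ i * x i :=
      Finset.sum_nonneg fun i _ ↦ mul_nonneg (div_nonneg (hc_nonneg i j) (hσ i).le) (hx i)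
    linarith
  have := fun j ↦ isProbabilityMeasure_gammaMeasure (hγ j) one_pos
  have := isProbabilityMeasure_expMeasure one_pos
  have hA : MeasurableSet {p | ∀ i, x i < paretoCoord n σ c i p} := by
    simp only [ofPred_forall]
    exact .iInter fun i ↦ measurableSet_lt measurable_const (measurable_paretoCoord n σ c i)
  have hpos : ∀ᵐ y ∂Measure.pi fun j ↦ gammaMeasure (γ j) 1, ∀ j, 0 < y j :=
    ae_all_iff.2 fun j ↦ Measure.tendsto_eval_ae_ae.eventually (ae_pos_gammaMeasure _ _)
  rw [paretoModelMeasure, ← expMeasure.eq_1, Measure.prod_apply_symm hA,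
    lintegral_congr_ae (hpos.mono fun y hy ↦
      pi_expMeasure_paretoCoord_slice hσ hc_nonneg hc_pos hx hy),
    lintegral_pi_prod_eq_prod_lintegral
      (f := fun j s ↦ ENNReal.ofReal (exp (-((∑ i, c i j / σ i * x i) * s)))) fun j ↦ by fun_prop,
    ENNReal.ofReal_prod_of_nonneg fun j _ ↦ (rpow_pos_of_pos (ht j) _).le]
  refine Finset.prod_congr rfl fun j _ ↦ ?_
  rw [lintegral_exp_neg_mul_gammaMeasure (hγ j) one_pos (ht j), one_div, inv_rpow (ht j).le,
    rpow_neg (ht j).le]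

/-- the joint survival function of `(X_1,…,X_n)` in the `Pa^c(σ,γ)` model is
`∏_j (1 + ∑_i (c_{i,j}/σ_i) x_i)^{-γ_j}`. -/
theorem multivariate_pareto_survival
    (n : ℕ) (hn : 1 ≤ n)
    (σ : Fin n → ℝ) (hσ : ∀ i, 0 < σ i)
    (γ : Fin (n + 1) → ℝ) (hγ : ∀ j, 0 < γ j)
    (c : Fin n → Fin (n + 1) → ℝ) (hc : ∀ i j, c i j = 0 ∨ c i j = 1)
    (hrow : ∀ i, ∃ j, c i j = 1)
    (x : Fin n → ℝ) (hx : ∀ i, 0 ≤ x i) :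
    paretoModelMeasure n γ {p | ∀ i, x i < paretoCoord n σ c i p}
      = ENNReal.ofReal (∏ j, (1 + ∑ i, (c i j / σ i) * x i) ^ (-(γ j))) :=
  multivariate_pareto_survival_general n σ hσ γ hγ c hc hrow x hx
end

section
/- (Economic Conditional Tail Expectation.) Let σ_k, σ_l > 0, γ_k, γ_l ≥ 0, γ_0 > 0 with γ*_k = γ_k + γ_0 > 1 and γ*_l = γ_l + γ_0, and let F̄(s,t) = (1+s/σ_k)^{−γ_k}(1+t/σ_l)^{−γ_l}(1+s/σ_k+t/σ_l)^{−γ_0} be the bivariate Pareto survival function. Fix q ∈ [0,1) and let t_q = σ_l·((1−q)^{−1/γ*_l} − 1) be the Value-at-Risk of the second coordinate at level q, so that F̄(0,t_q) = 1−q. Then the economic CTE, E[X_k | X_l > VaR_q[X_l]] = (1/(1−q))·∫_0^∞ F̄(s, t_q) ds, equals (σ_k/(γ*_k − 1)) · ∑_{m=0}^∞ ((γ_0)_m/(γ*_k)_m) · (t_q/(σ_l + t_q))^m, where (a)_m = ∏_{r=0}^{m−1}(a+r) is the Pochhammer symbol; the series is the Gauss hypergeometric value ₂F₁(γ_0, 1;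 γ*_k; t_q/(σ_l + t_q)). -/
open MeasureTheory Real Set Filter Topology

/-!
Write `x = s / σ_k` and `z = t_q / σ_l`. Since `1 + x + z = (1 + x)(1 + z)(1 - u·x/(1 + x))` with
`u = z/(1 + z) = t_q/(σ_l + t_q)`, the survival function factors as
`F̄(s, t_q) = (1 + z)^{-γ*_l} · (1 + x)^{-γ*_k} (1 - u·x/(1 + x))^{-γ_0}`, and the choice of `t_q`
makes the first factor `1 - q`. Expanding the last factor in the binomial series
`(1 - w)^{-a} = ∑ (a)_m w^m / m!` and integrating term by term leaves the Beta-type integrals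
`∫_0^∞ (1 + x)^{-γ} (x/(1 + x))^m dx = m! / ((γ - 1)(γ)_m)`, which follow from one integration
by parts, `(γ + m) I_{m+1} = (m + 1) I_m`.
-/

/-- The Pochhammer symbol `(a)_m = a (a+1) ⋯ (a+m-1)`. -/
noncomputable def poch (a : ℝ) (m : ℕ) : ℝ := ∏ r ∈ Finset.range m, (a + r)

lemma poch_succ (a : ℝ) (m : ℕ) : poch a (m + 1) = poch a m * (a + m) :=
  Finset.prod_range_succ _ _

lemma poch_pos {a : ℝ} (ha : 0 < a) (m : ℕ) : 0 < poch a m :=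
  Finset.prod_pos fun _ _ ↦ by positivity

lemma poch_nonneg {a : ℝ} (ha : 0 ≤ a) (m : ℕ) : 0 ≤ poch a m :=
  Finset.prod_nonneg fun _ _ ↦ by positivity

lemma poch_le_poch {a c : ℝ} (ha : 0 ≤ a) (hac : a ≤ c) (m : ℕ) : poch a m ≤ poch c m :=
  Finset.prod_le_prod (fun _ _ ↦ by positivity) fun _ _ ↦ by linarith

lemma poch_eq_ascPochhammer_eval (a : ℝ) (m : ℕ) : poch a m = (ascPochhammer ℝ m).eval a := by
  induction m with
  | zero => simp [poch]
  | succ m ih => rw [poch_succ, ih, ascPochhammer_succ_eval]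

lemma choose_add_sub_one_eq_poch_div_factorial (a : ℝ) (m : ℕ) :
    Ring.choose (a + m - 1) m = poch a m / m.factorial := by
  rw [Ring.choose_eq_smul, Polynomial.descPochhammer_smeval_eq_ascPochhammer,
    Polynomial.ascPochhammer_smeval_eq_eval,
    poch_eq_ascPochhammer_eval, smul_eq_mul, inv_mul_eq_div]
  ring_nf

lemma hasSum_poch_div_factorial_mul_pow (a : ℝ) {w : ℝ} (hw : |w| < 1) :
    HasSum (fun m ↦ poch a m / m.factorial * w ^ m) ((1 - w) ^ (-a)) := by
  have h := (Real.one_div_one_sub_rpow_hasFPowerSeriesOnBall_zero a).hasSum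
    (y := w) (by simpa [enorm_eq_nnnorm, ← NNReal.coe_lt_one] using hw)
  simp only [FormalMultilinearSeries.ofScalars_apply_eq, choose_add_sub_one_eq_poch_div_factorial,
    smul_eq_mul, zero_add] at h
  rwa [rpow_neg (by linarith [le_abs_self w]), inv_eq_one_div]

lemma summable_poch_div_poch_mul_pow {a c u : ℝ} (ha : 0 ≤ a) (hac : a ≤ c) (hu0 : 0 ≤ u)
    (hu1 : u < 1) : Summable fun m ↦ poch a m / poch c m * u ^ m := by
  refine (summable_geometric_of_lt_one hu0 hu1).of_nonneg_of_le
    (fun m ↦ mul_nonneg (div_nonneg (poch_nonneg ha m) (poch_nonneg (ha.trans hac) m))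
      (pow_nonneg hu0 m)) fun m ↦ ?_
  exact mul_le_of_le_one_left (pow_nonneg hu0 m)
    (div_le_one_of_le₀ (poch_le_poch ha hac m) (poch_nonneg (ha.trans hac) m))

lemma div_one_add_mem_Icc {x : ℝ} (hx : 0 ≤ x) : x / (1 + x) ∈ Icc 0 1 :=
  ⟨by positivity, div_le_one_of_le₀ (by linarith) (by positivity)⟩

lemma tendsto_one_add_rpow_atTop_zero {a : ℝ} (ha : a < 0) :
    Tendsto (fun x : ℝ ↦ (1 + x) ^ a) atTop (𝓝 0) := by
  have h := (tendsto_rpow_neg_atTop (neg_pos.2 ha)).comp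
    (tendsto_atTop_add_const_left _ 1 tendsto_id)
  rwa [neg_neg] at h

lemma integrableOn_one_add_rpow_neg_mul_div_pow {γ : ℝ} (hγ : 1 < γ) (m : ℕ) :
    IntegrableOn (fun x : ℝ ↦ (1 + x) ^ (-γ) * (x / (1 + x)) ^ m) (Ioi 0) := by
  have hmaj : IntegrableOn (fun x : ℝ ↦ (x + 1) ^ (-γ)) (Ioi 0) :=
    integrableOn_add_rpow_Ioi_of_lt (by linarith) (by norm_num)
  refine hmaj.mono' ?_ ?_
  · refine ContinuousOn.aestronglyMeasurable ?_ measurableSet_Ioi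
    intro x hx
    have h1x : 1 + x ≠ 0 := by linarith [mem_Ioi.1 hx]
    have hbase : ContinuousAt (fun x : ℝ ↦ 1 + x) x := continuousAt_const.add continuousAt_id
    exact ((hbase.rpow_const (Or.inl h1x)).mul
      ((continuousAt_id.div hbase h1x).pow m)).continuousWithinAt
  · filter_upwards [ae_restrict_mem measurableSet_Ioi] with x (hx : 0 < x)
    obtain ⟨hy0, hy1⟩ := div_one_add_mem_Icc hx.le
    rw [norm_of_nonneg (by positivity), add_comm x]
    exact mul_le_of_le_one_right (by positivity) (pow_le_one₀ hy0 hy1)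

lemma integral_one_add_rpow_neg {γ : ℝ} (hγ : 1 < γ) :
    ∫ x in Ioi 0, (1 + x) ^ (-γ) = 1 / (γ - 1) := by
  have hderiv : ∀ x ∈ Ici (0 : ℝ),
      HasDerivAt (fun x : ℝ ↦ (1 + x) ^ (1 - γ)) ((1 - γ) * (1 + x) ^ (-γ)) x := fun x hx ↦ by
    have h1x : (1 + x) ≠ 0 := by linarith [mem_Ici.1 hx]
    simpa [show 1 - γ - 1 = -γ by ring] using
      ((hasDerivAt_id' x).const_add 1).rpow_const (p := 1 - γ) (Or.inl h1x)
  have hint : IntegrableOn (fun x : ℝ ↦ (1 - γ) * (1 + x) ^ (-γ)) (Ioi 0) := by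
    have h := (integrableOn_one_add_rpow_neg_mul_div_pow hγ 0).const_mul (1 - γ)
    simp only [pow_zero, mul_one] at h
    exact h
  have hFTC := integral_Ioi_of_hasDerivAt_of_tendsto' hderiv hint
    (tendsto_one_add_rpow_atTop_zero (by linarith))
  rw [integral_const_mul, add_zero, one_rpow, zero_sub] at hFTC
  rw [eq_div_iff (by linarith)]
  linear_combination -hFTC

lemma hasDerivAt_div_one_add_pow_mul_one_add_rpow (γ : ℝ) (m : ℕ) {x : ℝ} (hx : 0 ≤ x) :
    HasDerivAt (fun x : ℝ ↦ (x / (1 + x)) ^ (m + 1) * (1 + x) ^ (1 - γ))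
      ((m + 1) * ((1 + x) ^ (-γ) * (x / (1 + x)) ^ m)
        - (γ + m) * ((1 + x) ^ (-γ) * (x / (1 + x)) ^ (m + 1))) x := by
  have h1x : 0 < 1 + x := by linarith
  have hbase : HasDerivAt (fun x : ℝ ↦ 1 + x) 1 x := (hasDerivAt_id x).const_add 1
  have hy := ((hasDerivAt_id' x).div hbase h1x.ne').pow (m + 1)
  refine (hy.mul (hbase.rpow_const (p := 1 - γ) (Or.inl h1x.ne'))).congr_deriv ?_
  rw [show 1 - γ - 1 = -γ by ring, show 1 - γ = -γ + 1 by ring, rpow_add_one h1x.ne']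
  simp only [Pi.div_apply, Pi.pow_apply, Nat.add_sub_cancel, Nat.cast_add, Nat.cast_one]
  have hquot : (1 * (1 + x) - x * 1) / (1 + x) ^ 2 * (1 + x) = 1 - x / (1 + x) := by
    field_simp
  linear_combination ((m + 1) * (x / (1 + x)) ^ m * (1 + x) ^ (-γ)) * hquot

lemma integral_one_add_rpow_neg_mul_div_pow_succ {γ : ℝ} (hγ : 1 < γ) (m : ℕ) :
    (γ + m) * ∫ x in Ioi 0, (1 + x) ^ (-γ) * (x / (1 + x)) ^ (m + 1)
      = (m + 1) * ∫ x in Ioi 0, (1 + x) ^ (-γ) * (x / (1 + x)) ^ m := by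
  have hG : Tendsto (fun x : ℝ ↦ (x / (1 + x)) ^ (m + 1) * (1 + x) ^ (1 - γ)) atTop (𝓝 0) := by
    refine squeeze_zero' ?_ ?_ (tendsto_one_add_rpow_atTop_zero (a := 1 - γ) (by linarith))
    all_goals filter_upwards [eventually_ge_atTop 0] with x hx
    all_goals obtain ⟨hy0, hy1⟩ := div_one_add_mem_Icc hx
    · positivity
    · exact mul_le_of_le_one_left (by positivity) (pow_le_one₀ hy0 hy1)
  have hFTC := integral_Ioi_of_hasDerivAt_of_tendsto'
    (fun x hx ↦ hasDerivAt_div_one_add_pow_mul_one_add_rpow γ m hx)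
    (((integrableOn_one_add_rpow_neg_mul_div_pow hγ m).const_mul _).sub
      ((integrableOn_one_add_rpow_neg_mul_div_pow hγ (m + 1)).const_mul _)) hG
  rw [integral_sub ((integrableOn_one_add_rpow_neg_mul_div_pow hγ m).const_mul _)
      ((integrableOn_one_add_rpow_neg_mul_div_pow hγ (m + 1)).const_mul _),
    integral_const_mul, integral_const_mul] at hFTC
  simp only [zero_div, zero_pow (Nat.succ_ne_zero m), zero_mul, sub_zero] at hFTC
  linarith

lemma integral_one_add_rpow_neg_mul_div_pow {γ : ℝ} (hγ : 1 < γ) (m : ℕ) :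
    ∫ x in Ioi 0, (1 + x) ^ (-γ) * (x / (1 + x)) ^ m = m.factorial / ((γ - 1) * poch γ m) := by
  induction m with
  | zero => simpa [poch] using integral_one_add_rpow_neg hγ
  | succ m ih =>
    have hrec := integral_one_add_rpow_neg_mul_div_pow_succ hγ m
    have hγm : 0 < γ + m := by positivity
    rw [ih, mul_comm, ← eq_div_iff_mul_eq hγm.ne'] at hrec
    rw [hrec, poch_succ, Nat.factorial_succ]
    have := poch_pos (by linarith : 0 < γ) m
    field_simp
    push_cast
    ring

lemma integral_one_add_rpow_neg_mul_one_sub_mul_div_rpow_neg {γ a u : ℝ} (hγ : 1 < γ)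
    (ha : 0 ≤ a) (haγ : a ≤ γ) (hu0 : 0 ≤ u) (hu1 : u < 1) :
    ∫ x in Ioi 0, (1 + x) ^ (-γ) * (1 - u * (x / (1 + x))) ^ (-a)
      = 1 / (γ - 1) * ∑' m, poch a m / poch γ m * u ^ m := by
  set f : ℕ → ℝ → ℝ := fun m x ↦
    poch a m / m.factorial * u ^ m * ((1 + x) ^ (-γ) * (x / (1 + x)) ^ m) with hf
  have hexpand : ∀ x ∈ Ioi (0 : ℝ), (1 + x) ^ (-γ) * (1 - u * (x / (1 + x))) ^ (-a)
      = ∑' m, f m x := fun x (hx : 0 < x) ↦ by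
    obtain ⟨hy0, hy1⟩ := div_one_add_mem_Icc hx.le
    have huy : |u * (x / (1 + x))| < 1 := by
      rw [abs_of_nonneg (by positivity)]
      exact lt_of_le_of_lt (mul_le_of_le_one_right hu0 hy1) hu1
    rw [← (hasSum_poch_div_factorial_mul_pow a huy).tsum_eq, ← tsum_mul_left]
    exact tsum_congr fun m ↦ by rw [hf, mul_pow]; ring
  have hintegral : ∀ m, ∫ x in Ioi 0, f m x = 1 / (γ - 1) * (poch a m / poch γ m * u ^ m) := by
    intro m
    have := poch_pos (by linarith : 0 < γ) m
    have : γ - 1 ≠ 0 := by linarith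
    rw [integral_const_mul, integral_one_add_rpow_neg_mul_div_pow hγ m]
    field_simp
  have hnorm : ∀ m, ∫ x in Ioi 0, ‖f m x‖ = ∫ x in Ioi 0, f m x := fun m ↦
    setIntegral_congr_fun measurableSet_Ioi fun x (hx : 0 < x) ↦
      norm_of_nonneg (by have := poch_nonneg ha m; positivity)
  rw [setIntegral_congr_fun measurableSet_Ioi hexpand, ← integral_tsum_of_summable_integral_norm
      (fun m ↦ (integrableOn_one_add_rpow_neg_mul_div_pow hγ m).const_mul _), tsum_congr hintegral,
    tsum_mul_left]
  exact ((summable_poch_div_poch_mul_pow ha haγ hu0 hu1).mul_left (1 / (γ - 1))).congr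
    fun m ↦ ((hnorm m).trans (hintegral m)).symm

lemma setIntegral_Ioi_zero_comp_div (g : ℝ → ℝ) {σ : ℝ} (hσ : 0 < σ) :
    ∫ s in Ioi 0, g (s / σ) = σ * ∫ x in Ioi 0, g x := by
  simpa [div_eq_inv_mul] using integral_comp_mul_left_Ioi g 0 (inv_pos.2 hσ)

lemma pareto_survival_factorization (γk γl γ0 : ℝ) {x z : ℝ} (hx : 0 ≤ x) (hz : 0 ≤ z) :
    (1 + x) ^ (-γk) * (1 + z) ^ (-γl) * (1 + x + z) ^ (-γ0)
      = (1 + z) ^ (-(γl + γ0))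
          * ((1 + x) ^ (-(γk + γ0)) * (1 - z / (1 + z) * (x / (1 + x))) ^ (-γ0)) := by
  have hsplit : 1 + x + z = (1 + x) * (1 + z) * (1 - z / (1 + z) * (x / (1 + x))) := by
    field_simp; ring
  obtain ⟨-, hz1⟩ := div_one_add_mem_Icc hz
  obtain ⟨hx0, hx1⟩ := div_one_add_mem_Icc hx
  have hw : 0 ≤ 1 - z / (1 + z) * (x / (1 + x)) := sub_nonneg.2 (mul_le_one₀ hz1 hx0 hx1)
  rw [hsplit, mul_rpow (by positivity) hw, mul_rpow (by positivity) (by positivity), neg_add,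
    neg_add, rpow_add (by positivity), rpow_add (by positivity)]
  ring

/-- economic Conditional Tail Expectation: with
`t_q = σ_l((1-q)^{-1/γ*_l}-1)` one has `F̄(0,t_q) = 1-q` and
`(1/(1-q)) ∫_0^∞ F̄(s,t_q) ds
  = (σ_k/(γ*_k-1)) ∑_m ((γ_0)_m/(γ*_k)_m) (t_q/(σ_l+t_q))^m`,
the series being `₂F₁(γ_0, 1; γ*_k; t_q/(σ_l+t_q))`. -/
theorem economic_conditional_tail_expectation
    (σk σl γk γl γ0 : ℝ)
    (hσk : 0 < σk) (hσl : 0 < σl) (hγk : 0 ≤ γk) (hγl : 0 ≤ γl) (hγ0 : 0 < γ0)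
    (γsk γsl : ℝ) (hγsk : γsk = γk + γ0) (hγsl : γsl = γl + γ0) (hγsk1 : 1 < γsk)
    (Fbar : ℝ → ℝ → ℝ)
    (hF : ∀ s t, Fbar s t
      = (1 + s / σk) ^ (-γk) * (1 + t / σl) ^ (-γl) * (1 + s / σk + t / σl) ^ (-γ0))
    (q : ℝ) (hq : q ∈ Set.Ico (0 : ℝ) 1)
    (tq : ℝ) (htq : tq = σl * ((1 - q) ^ (-(1 / γsl)) - 1)) :
    Fbar 0 tq = 1 - q
      ∧ (1 / (1 - q)) * ∫ s in Set.Ioi (0 : ℝ), Fbar s tq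
          = (σk / (γsk - 1))
              * ∑' m : ℕ, (poch γ0 m / poch γsk m) * (tq / (σl + tq)) ^ m := by
  obtain ⟨hq0, hq1⟩ := hq
  have hγsl0 : 0 < γsl := by linarith
  have hquantile : 1 + tq / σl = (1 - q) ^ (-(1 / γsl)) := by
    rw [htq]; field_simp; ring
  have hmarginal : (1 + tq / σl) ^ (-γsl) = 1 - q := by
    rw [hquantile, ← rpow_mul (by linarith), show -(1 / γsl) * -γsl = 1 by field_simp, rpow_one]
  have htq0 : 0 ≤ tq := by
    rw [htq]
    refine mul_nonneg hσl.le (sub_nonneg.2 (one_le_rpow_of_pos_of_le_one_of_nonpos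
      (by linarith) (by linarith) ?_))
    rw [neg_nonpos]; positivity
  have hu : tq / (σl + tq) = tq / σl / (1 + tq / σl) := by field_simp
  have hsurvival : ∀ s, 0 ≤ s → Fbar s tq = (1 - q) *
      ((1 + s / σk) ^ (-γsk) * (1 - tq / (σl + tq) * (s / σk / (1 + s / σk))) ^ (-γ0)) := by
    intro s hs
    rw [hF, pareto_survival_factorization γk γl γ0 (by positivity) (by positivity), ← hγsk,
      ← hγsl, hmarginal, hu]
  refine ⟨by simpa using hsurvival 0 le_rfl, ?_⟩
  have hu1 : tq / (σl + tq) < 1 := by rw [div_lt_one (by positivity)]; linarith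
  rw [setIntegral_congr_fun measurableSet_Ioi fun s hs ↦ hsurvival s (le_of_lt hs),
    integral_const_mul, setIntegral_Ioi_zero_comp_div
      (fun x ↦ (1 + x) ^ (-γsk) * (1 - tq / (σl + tq) * (x / (1 + x))) ^ (-γ0)) hσk,
    integral_one_add_rpow_neg_mul_one_sub_mul_div_rpow_neg hγsk1 hγ0.le (by linarith)
      (by positivity) hu1]
  field_simp
end
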